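/- arXiv:1406.2588 — 2 statements merged into one kernel-verified Lean document; each statement's English description precedes it below -/
import Mathlib

section
/- Let c ≥ 0 be an integer and let ε > 0 be real. For every sufficiently large natural number n the following hold, where X_n is the set of vectors in (ZMod 2)^(n+1) with first coordinate 0 and Hamming weight greater than n − c, and Y_n is the set of vectors in (ZMod 2)^(n+1) with first coordinate 1 and Hamming weight at most (n − c)/2: the set X_n ∪ Y_n is triangle-free, does not contain 0, spans (ZMod 2)^(n+1), has critical number exactly c + 1, and satisfies |X_n ∪ Y_n| ≥ (1/4 − ε)·2^(n+1). -/
/-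
Over `ZMod 2` a triangle `x + y + z = 0` has an even number of points with first coordinate `1`.
With none, a point of `X` is the sum of two points of `X`, each vanishing on at most `c`
coordinates, so it has weight at most `2c`; with two, a point of `X` is the sum of two points of
weight at most `(n - c)/2`. Both are too light for `X` once `n ≥ 3c`.

The vectors vanishing on `c + 1` coordinates, the first among them, form a subspace of codimension
`c + 1` missing `X ∪ Y`. Conversely, let `W` have codimension `k ≤ c` and let `gᵢ` be the image in
the quotient by `W` of the `i`-th unit vector. Over `ZMod 2` every vector in the span of a family is
the sum of at most `dim` of its members. If `g₀` lies in the span `U` of the other `gᵢ`, this writes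
`g₀` as a sum of at most `k` of them, giving a vector of `Y` in `W`. Otherwise `dim U < k`, so
`∑_{i ≠ 0} gᵢ` is the sum of fewer than `c` of the `gᵢ`, and the remaining indices give a vector of
`X` in `W`.

Already `|Y| ≥ ∑_{w ≤ t} C(n, w)` with `t ≈ (n - c)/2`; by symmetry of the binomial coefficients this
falls short of `2^(n-1)` by at most `(c + 2) C(n, ⌊n/2⌋) / 2`, which is `O(2^n / √n)`.
-/

/-- Hamming weight of a vector over `ZMod 2`. -/
def hWt {m : ℕ} (x : Fin m → ZMod 2) : ℕ :=
  (Finset.univ.filter fun i => x i ≠ 0).card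

/-- `X` is triangle-free: no three pairwise distinct elements of `X` sum to zero. -/
def TriangleFree {n : ℕ} (X : Set (Fin n → ZMod 2)) : Prop :=
  ∀ x ∈ X, ∀ y ∈ X, ∀ z ∈ X, x ≠ y → y ≠ z → x ≠ z → x + y + z ≠ 0

/-- The critical number of `X ⊆ (ZMod 2)^n`. -/
noncomputable def critNum {n : ℕ} (X : Set (Fin n → ZMod 2)) : ℕ :=
  sInf {c : ℕ | ∃ W : Submodule (ZMod 2) (Fin n → ZMod 2),
    Module.finrank (ZMod 2) W + c = n ∧ ∀ x ∈ X, x ∉ W}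

/-- Vectors with first coordinate `0` and Hamming weight greater than `n - c`. -/
def Xn (n c : ℕ) : Set (Fin (n + 1) → ZMod 2) :=
  {x | x 0 = 0 ∧ n - c < hWt x}

/-- Vectors with first coordinate `1` and Hamming weight at most `(n - c)/2`. -/
def Yn (n c : ℕ) : Set (Fin (n + 1) → ZMod 2) :=
  {y | y 0 = 1 ∧ 2 * hWt y ≤ n - c}

open Finset Filter

section CharTwo

variable {V : Type*} [AddCommGroup V] [Module (ZMod 2) V]

lemma sum_smul_eq_sum_filter_ne_zero {ι : Type*} (s : Finset ι) (c : ι → ZMod 2) (g : ι → V) :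
    ∑ i ∈ s, c i • g i = ∑ i ∈ s with c i ≠ 0, g i := by
  rw [sum_filter]
  refine sum_congr rfl fun i _ => ?_
  obtain h | h : c i = 0 ∨ c i = 1 := by generalize c i = a; revert a; decide
  all_goals simp [h]

theorem exists_subset_card_le_finrank_sum_eq [FiniteDimensional (ZMod 2) V] {ι : Type*}
    (g : ι → V) (S : Finset ι) {v : V} (hv : v ∈ Submodule.span (ZMod 2) (g '' S)) :
    ∃ T ⊆ S, #T ≤ Module.finrank (ZMod 2) (Submodule.span (ZMod 2) (g '' S)) ∧
      ∑ i ∈ T, g i = v := by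
  classical
  obtain ⟨c, hc⟩ := (Submodule.mem_span_image_finset_iff_exists_fun' (ZMod 2)).1 hv
  rw [sum_smul_eq_sum_filter_ne_zero] at hc
  obtain ⟨T, hT, hmin⟩ := exists_min_image {T ∈ S.powerset | ∑ i ∈ T, g i = v} card
    ⟨_, mem_filter.2 ⟨mem_powerset.2 (filter_subset _ S), hc⟩⟩
  rw [mem_filter, mem_powerset] at hT
  -- a vanishing subsum could be removed from `T`, contradicting minimality
  have hli : LinearIndepOn (ZMod 2) g (T : Set ι) := by
    rw [linearIndepOn_iff']
    intro t a htT hta i hit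
    by_contra hai
    have hRT : {j ∈ t | a j ≠ 0} ⊆ T := (filter_subset _ t).trans (mod_cast htT)
    have hR : ∑ j ∈ t with a j ≠ 0, g j = 0 := by rw [← sum_smul_eq_sum_filter_ne_zero, hta]
    have hle := hmin (T \ {j ∈ t | a j ≠ 0}) (mem_filter.2 ⟨mem_powerset.2 (sdiff_subset.trans hT.1),
      by rw [sum_sdiff_eq_sub hRT, hR, sub_zero, hT.2]⟩)
    have hlt := card_lt_card (sdiff_ssubset hRT ⟨i, mem_filter.2 ⟨hit, hai⟩⟩)
    omega
  refine ⟨T, hT.1, ?_, hT.2⟩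
  calc #T = Module.finrank (ZMod 2) (Submodule.span (ZMod 2) (g '' T)) := by
        rw [Set.image_eq_range, finrank_span_eq_card hli]; simp
    _ ≤ _ := Submodule.finrank_mono (Submodule.span_mono (Set.image_mono (mod_cast hT.1)))

end CharTwo

lemma exists_finrank_add_card_eq_forall_eq_zero {K : Type*} [Field K] {m : ℕ}
    (S : Finset (Fin m)) :
    ∃ W : Submodule K (Fin m → K), Module.finrank K W + #S = m ∧ ∀ x ∈ W, ∀ i ∈ S, x i = 0 := by
  let r := LinearMap.funLeft K K ((↑) : S → Fin m)
  have hr : LinearMap.range r = ⊤ := LinearMap.range_eq_top.2 <|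
    LinearMap.funLeft_surjective_of_injective _ _ _ Subtype.val_injective
  refine ⟨LinearMap.ker r, ?_, fun x hx i hi => congrFun (LinearMap.mem_ker.1 hx) ⟨i, hi⟩⟩
  have := LinearMap.finrank_range_add_finrank_ker r
  rw [hr, finrank_top, Module.finrank_fintype_fun_eq_card, Module.finrank_fintype_fun_eq_card,
    Fintype.card_coe, Fintype.card_fin] at this
  omega

section HammingWeight

variable {m : ℕ}

def indicatorVec (T : Finset (Fin m)) : Fin m → ZMod 2 := fun i => if i ∈ T then 1 else 0

lemma indicatorVec_eq_sum (T : Finset (Fin m)) : indicatorVec T = ∑ i ∈ T, Pi.single i 1 := by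
  ext j
  simp [indicatorVec, Finset.sum_apply, Pi.single_apply]

lemma filter_indicatorVec_ne_zero (T : Finset (Fin m)) :
    ({i | indicatorVec T i ≠ 0} : Finset (Fin m)) = T := by
  ext i
  simp [indicatorVec]

lemma hWt_indicatorVec (T : Finset (Fin m)) : hWt (indicatorVec T) = #T :=
  congrArg card (filter_indicatorVec_ne_zero T)

lemma indicatorVec_injective : Function.Injective (indicatorVec (m := m)) := fun S T h => by
  rw [← filter_indicatorVec_ne_zero S, h, filter_indicatorVec_ne_zero]

lemma hWt_eq_hammingNorm (x : Fin m → ZMod 2) : hWt x = hammingNorm x := rfl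

lemma hWt_add_le (x y : Fin m → ZMod 2) : hWt (x + y) ≤ hWt x + hWt y := by
  have := hammingDist_triangle x 0 y
  rw [hammingDist_zero_right, hammingDist_zero_left, hammingDist_eq_hammingNorm,
    ZModModule.neg_eq_self] at this
  simpa only [hWt_eq_hammingNorm] using this

lemma hWt_add_one (x : Fin m → ZMod 2) : hWt (x + 1) = m - hWt x := by
  have hflip : ∀ a : ZMod 2, a + 1 ≠ 0 ↔ ¬ a ≠ 0 := by decide
  have := card_filter_add_card_filter_not (s := univ) (p := fun i => x i ≠ 0)
  simp only [hWt, Pi.add_apply, Pi.one_apply, hflip, card_univ, Fintype.card_fin] at this ⊢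
  omega

lemma hWt_add_le_sub_add_sub (x y : Fin m → ZMod 2) :
    hWt (x + y) ≤ (m - hWt x) + (m - hWt y) := by
  rw [← hWt_add_one x, ← hWt_add_one y]
  convert hWt_add_le (x + 1) (y + 1) using 2
  rw [add_add_add_comm, ZModModule.add_self, add_zero]

lemma hWt_le_sub_card_of_eq_zero {x : Fin m → ZMod 2} {S : Finset (Fin m)}
    (hx : ∀ i ∈ S, x i = 0) : hWt x ≤ m - #S := by
  have : ({i | x i ≠ 0} : Finset (Fin m)) ⊆ Sᶜ := fun i hi =>
    mem_compl.2 fun hiS => (mem_filter.1 hi).2 (hx i hiS)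
  simpa [hWt, card_compl] using card_le_card this

end HammingWeight

section Binomial

theorem centralBinom_sq_mul_le (m : ℕ) : m.centralBinom ^ 2 * (2 * m + 1) ≤ 16 ^ m := by
  induction m with
  | zero => simp
  | succ k ih =>
    refine Nat.le_of_mul_le_mul_left ?_ (by positivity : 0 < (k + 1) ^ 2)
    calc (k + 1) ^ 2 * ((k + 1).centralBinom ^ 2 * (2 * (k + 1) + 1))
        = ((k + 1) * (k + 1).centralBinom) ^ 2 * (2 * k + 3) := by ring
      _ = (k.centralBinom ^ 2 * (2 * k + 1)) * (4 * (2 * k + 1) * (2 * k + 3)) := by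
          rw [Nat.succ_mul_centralBinom_succ]; ring
      _ ≤ 16 ^ k * (16 * (k + 1) ^ 2) := Nat.mul_le_mul ih (by nlinarith)
      _ = (k + 1) ^ 2 * 16 ^ (k + 1) := by ring

theorem choose_half_sq_mul_le (n : ℕ) : n.choose (n / 2) ^ 2 * n ≤ 4 ^ (n + 1) := by
  set k := (n + 1) / 2
  have hchoose : n.choose (n / 2) ≤ k.centralBinom :=
    (Nat.choose_le_choose _ (by omega : n ≤ 2 * k)).trans (Nat.choose_le_centralBinom _ _)
  calc n.choose (n / 2) ^ 2 * n ≤ k.centralBinom ^ 2 * (2 * k + 1) := by gcongr; omega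
    _ ≤ 16 ^ k := centralBinom_sq_mul_le k
    _ = 4 ^ (2 * k) := by rw [pow_mul]; norm_num
    _ ≤ 4 ^ (n + 1) := Nat.pow_le_pow_right (by norm_num) (by omega)

theorem eventually_mul_choose_half_le (C : ℝ) {ε : ℝ} (hε : 0 < ε) :
    ∀ᶠ n : ℕ in atTop, C * n.choose (n / 2) ≤ ε * 2 ^ n := by
  filter_upwards [eventually_ge_atTop 1,
    tendsto_natCast_atTop_atTop.eventually_ge_atTop (4 * C ^ 2 / ε ^ 2)] with n hn1 hn
  rw [div_le_iff₀ (by positivity)] at hn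
  have hM : (n.choose (n / 2) : ℝ) ^ 2 * n ≤ 4 * (2 ^ n) ^ 2 := by
    calc (n.choose (n / 2) : ℝ) ^ 2 * n ≤ 4 ^ (n + 1) := by exact_mod_cast choose_half_sq_mul_le n
      _ = 4 * (2 ^ n) ^ 2 := by rw [← pow_mul, pow_succ', pow_mul']; norm_num
  have hsq : (n : ℝ) * (C * n.choose (n / 2)) ^ 2 ≤ n * (ε * 2 ^ n) ^ 2 :=
    calc (n : ℝ) * (C * n.choose (n / 2)) ^ 2 = C ^ 2 * ((n.choose (n / 2) : ℝ) ^ 2 * n) := by ring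
      _ ≤ C ^ 2 * (4 * (2 ^ n) ^ 2) := by gcongr
      _ = 4 * C ^ 2 * (2 ^ n) ^ 2 := by ring
      _ ≤ n * ε ^ 2 * (2 ^ n) ^ 2 := by gcongr
      _ = n * (ε * 2 ^ n) ^ 2 := by ring
  exact (abs_le_of_sq_le_sq' (le_of_mul_le_mul_left hsq (by exact_mod_cast hn1))
    (by positivity)).2

theorem two_pow_le_two_mul_sum_range_choose_add (n t : ℕ) (ht : 2 * t < n) :
    2 ^ n ≤ 2 * ∑ w ∈ range (t + 1), n.choose w + (n - 2 * t - 1) * n.choose (n / 2) := by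
  have hupper : ∑ w ∈ Ico (n - t) (n + 1), n.choose w = ∑ w ∈ range (t + 1), n.choose w := by
    have := sum_Ico_reflect n.choose 0 (by omega : t + 1 ≤ n + 1)
    rw [show n + 1 - (t + 1) = n - t by omega, Nat.sub_zero] at this
    rw [← this, range_eq_Ico]
    exact sum_congr rfl fun w hw => Nat.choose_symm (by simp at hw; omega)
  have hmiddle : ∑ w ∈ Ico (t + 1) (n - t), n.choose w ≤ (n - 2 * t - 1) * n.choose (n / 2) := by
    calc ∑ w ∈ Ico (t + 1) (n - t), n.choose w ≤ #(Ico (t + 1) (n - t)) • n.choose (n / 2) :=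
          sum_le_card_nsmul _ _ _ fun w _ => Nat.choose_le_middle w n
      _ = (n - 2 * t - 1) * n.choose (n / 2) := by rw [Nat.card_Ico, smul_eq_mul]; congr 1; omega
  rw [← Nat.sum_range_choose, ← sum_range_add_sum_Ico _ (by omega : n - t ≤ n + 1),
    ← sum_range_add_sum_Ico _ (by omega : t + 1 ≤ n - t), hupper]
  omega

lemma card_filter_powerset_card_le {α : Type*} [DecidableEq α] (s : Finset α) (t : ℕ) :
    #{T ∈ s.powerset | #T ≤ t} = ∑ w ∈ range (t + 1), (#s).choose w := by
  rw [card_eq_sum_card_fiberwise (f := card) (t := range (t + 1))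
    fun T hT => mem_range.2 (Nat.lt_succ_of_le (mem_filter.1 hT).2)]
  refine sum_congr rfl fun w hw => ?_
  rw [filter_filter, ← card_powersetCard, powersetCard_eq_filter]
  congr 1
  refine filter_congr fun T _ => ⟨And.right, fun h => ⟨?_, h⟩⟩
  rw [mem_range] at hw
  omega

end Binomial

section XnYn

variable {n c : ℕ}

lemma indicatorVec_insert_zero_mem_Yn {T : Finset (Fin (n + 1))} (h0T : 0 ∉ T)
    (hT : 2 * (#T + 1) ≤ n - c) : indicatorVec (insert 0 T) ∈ Yn n c :=
  ⟨by simp [indicatorVec], by rwa [hWt_indicatorVec, card_insert_of_notMem h0T]⟩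

lemma add_notMem_Xn (hn : 3 * c ≤ n) {y z : Fin (n + 1) → ZMod 2}
    (hy : y ∈ Xn n c ∪ Yn n c) (hz : z ∈ Xn n c ∪ Yn n c) : y + z ∉ Xn n c := by
  rintro ⟨h0, hw⟩
  rcases hy with ⟨hy0, hy⟩ | ⟨hy0, hy⟩ <;> rcases hz with ⟨hz0, hz⟩ | ⟨hz0, hz⟩
  · have := hWt_add_le_sub_add_sub y z
    omega
  · simp [hy0, hz0] at h0
  · simp [hy0, hz0] at h0
  · have := hWt_add_le y z
    omega

theorem triangleFree_Xn_union_Yn (hn : 3 * c ≤ n) : TriangleFree (Xn n c ∪ Yn n c) := by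
  intro x hx y hy z hz _ _ _ h
  have hsum : ∀ a b d : Fin (n + 1) → ZMod 2, a + (b + d) = 0 → a = b + d := fun a b d h => by
    rw [← ZModModule.neg_eq_self (b + d)]
    exact eq_neg_of_add_eq_zero_left h
  rcases hx with hxX | hxY
  · exact add_notMem_Xn hn hy hz (hsum x y z (by rw [← h]; abel) ▸ hxX)
  rcases hy with hyX | hyY
  · exact add_notMem_Xn hn (.inr hxY) hz (hsum y x z (by rw [← h]; abel) ▸ hyX)
  rcases hz with hzX | hzY
  · exact add_notMem_Xn hn (.inr hxY) (.inr hyY) (hsum z x y (by rw [← h]; abel) ▸ hzX)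
  have h0 := congrFun h 0
  simp only [Pi.add_apply, hxY.1, hyY.1, hzY.1, Pi.zero_apply] at h0
  exact absurd h0 (by decide)

lemma zero_notMem_Xn_union_Yn : (0 : Fin (n + 1) → ZMod 2) ∉ Xn n c ∪ Yn n c := by
  rintro (⟨-, h⟩ | ⟨h, -⟩)
  · simp [hWt] at h
  · exact zero_ne_one h

theorem span_Xn_union_Yn (hn : c + 4 ≤ n) :
    Submodule.span (ZMod 2) (Xn n c ∪ Yn n c) = ⊤ := by
  have hY : ∀ T : Finset (Fin (n + 1)), 0 ∉ T → #T ≤ 1 →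
      indicatorVec (insert 0 T) ∈ Submodule.span (ZMod 2) (Xn n c ∪ Yn n c) := fun T h0 hT =>
    Submodule.subset_span <| .inr <| indicatorVec_insert_zero_mem_Yn h0 (by omega)
  have he0 := hY ∅ (notMem_empty 0) (by simp)
  rw [insert_empty, indicatorVec_eq_sum, sum_singleton] at he0
  rw [eq_top_iff, ← (Pi.basisFun (ZMod 2) (Fin (n + 1))).span_eq, Submodule.span_le]
  rintro _ ⟨i, rfl⟩
  rw [Pi.basisFun_apply]
  by_cases hi : i = 0
  · exact hi ▸ he0
  · have he0i := hY {i} (by simpa [eq_comm] using hi) (by simp)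
    rw [indicatorVec_eq_sum, sum_pair (Ne.symm hi)] at he0i
    simpa using Submodule.sub_mem _ he0i he0

lemma exists_finrank_add_eq_forall_notMem_Xn_union_Yn (hn : c + 1 ≤ n) :
    ∃ W : Submodule (ZMod 2) (Fin (n + 1) → ZMod 2),
      Module.finrank (ZMod 2) W + (c + 1) = n + 1 ∧ ∀ x ∈ Xn n c ∪ Yn n c, x ∉ W := by
  obtain ⟨S, h0S, hS⟩ := exists_superset_card_eq (s := {(0 : Fin (n + 1))}) (n := c + 1)
    (by simp) (by simp; omega)
  obtain ⟨W, hW, hWS⟩ := exists_finrank_add_card_eq_forall_eq_zero (K := ZMod 2) S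
  refine ⟨W, hS ▸ hW, ?_⟩
  rintro x (⟨-, hx⟩ | ⟨hx0, -⟩) hxW
  · have := hWt_le_sub_card_of_eq_zero (hWS x hxW)
    omega
  · exact one_ne_zero (hx0 ▸ hWS x hxW 0 (h0S (mem_singleton_self 0)))

lemma exists_mem_Xn_union_Yn_of_finrank_add_eq (hn : 3 * c + 2 ≤ n)
    (W : Submodule (ZMod 2) (Fin (n + 1) → ZMod 2)) {k : ℕ} (hk : k ≤ c)
    (hW : Module.finrank (ZMod 2) W + k = n + 1) : ∃ x ∈ Xn n c ∪ Yn n c, x ∈ W := by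
  let g : Fin (n + 1) → _ ⧸ W := fun i => W.mkQ (Pi.single i 1)
  have hmem : ∀ T, indicatorVec T ∈ W ↔ ∑ i ∈ T, g i = 0 := fun T => by
    rw [← Submodule.Quotient.mk_eq_zero, ← Submodule.mkQ_apply, indicatorVec_eq_sum, map_sum]
  have hQ : Module.finrank (ZMod 2) (_ ⧸ W) = k := by
    have := W.finrank_quotient_add_finrank
    rw [Module.finrank_fintype_fun_eq_card, Fintype.card_fin] at this
    omega
  set S := univ.erase (0 : Fin (n + 1))
  by_cases h0 : g 0 ∈ Submodule.span (ZMod 2) (g '' S)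
  · obtain ⟨T, hTS, hT, hsum⟩ := exists_subset_card_le_finrank_sum_eq g S h0
    have hTk : #T ≤ k := hT.trans (hQ ▸ Submodule.finrank_le _)
    have h0T : 0 ∉ T := (subset_erase.1 hTS).2
    refine ⟨_, .inr (indicatorVec_insert_zero_mem_Yn h0T (by omega)), (hmem _).2 ?_⟩
    rw [sum_insert h0T, hsum, ZModModule.add_self]
  · have hU : Module.finrank (ZMod 2) (Submodule.span (ZMod 2) (g '' S)) < k :=
      hQ ▸ Submodule.finrank_lt fun h => h0 (h ▸ Submodule.mem_top)
    obtain ⟨T, hTS, hT, hsum⟩ := exists_subset_card_le_finrank_sum_eq g S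
      (Submodule.sum_mem _ fun i hi => Submodule.subset_span (Set.mem_image_of_mem g hi))
    refine ⟨indicatorVec (S \ T), .inl ⟨by simp [indicatorVec, S], ?_⟩, (hmem _).2 ?_⟩
    · rw [hWt_indicatorVec, card_sdiff_of_subset hTS, card_erase_of_mem (mem_univ _), card_univ,
        Fintype.card_fin]
      omega
    · rw [sum_sdiff_eq_sub hTS, hsum, sub_self]

theorem critNum_Xn_union_Yn (hn : 3 * c + 2 ≤ n) : critNum (Xn n c ∪ Yn n c) = c + 1 := by
  refine IsLeast.csInf_eq ⟨exists_finrank_add_eq_forall_notMem_Xn_union_Yn (by omega), ?_⟩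
  rintro k ⟨W, hW, hWX⟩
  by_contra! hk
  obtain ⟨x, hx, hxW⟩ := exists_mem_Xn_union_Yn_of_finrank_add_eq hn W (by omega) hW
  exact hWX x hx hxW

theorem two_pow_le_two_mul_ncard_Yn_add (hn : c + 2 ≤ n) :
    2 ^ n ≤ 2 * (Yn n c).ncard + (c + 2) * n.choose (n / 2) := by
  set t := (n - c) / 2 - 1
  set S := univ.erase (0 : Fin (n + 1))
  have hcard : ∑ w ∈ range (t + 1), n.choose w ≤ (Yn n c).ncard := by
    have hcount := card_filter_powerset_card_le S t
    rw [show #S = n by simp [S]] at hcount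
    rw [← hcount, ← Set.ncard_coe_finset]
    have hmemS {T : Finset (Fin (n + 1))} (hT : T ∈ (({T ∈ S.powerset | #T ≤ t} :
        Finset _) : Set _)) : (T ⊆ univ ∧ 0 ∉ T) ∧ #T ≤ t := by
      simpa [S, subset_erase] using hT
    refine Set.ncard_le_ncard_of_injOn (fun T => indicatorVec (insert 0 T)) ?_ ?_ (Set.toFinite _)
    · intro T hT
      obtain ⟨⟨-, h0T⟩, hTt⟩ := hmemS hT
      exact indicatorVec_insert_zero_mem_Yn h0T (by omega)
    · intro T hT T' hT' h
      rw [← erase_insert (hmemS hT).1.2, indicatorVec_injective h, erase_insert (hmemS hT').1.2]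
  calc 2 ^ n ≤ 2 * ∑ w ∈ range (t + 1), n.choose w + (n - 2 * t - 1) * n.choose (n / 2) :=
        two_pow_le_two_mul_sum_range_choose_add n t (by omega)
    _ ≤ 2 * (Yn n c).ncard + (c + 2) * n.choose (n / 2) := by gcongr; omega

end XnYn

theorem stmt_4 (c : ℕ) (ε : ℝ) (hε : 0 < ε) :
    ∃ N : ℕ, ∀ n ≥ N,
      TriangleFree (Xn n c ∪ Yn n c) ∧
      (0 : Fin (n + 1) → ZMod 2) ∉ Xn n c ∪ Yn n c ∧
      Submodule.span (ZMod 2) (Xn n c ∪ Yn n c) = ⊤ ∧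
      critNum (Xn n c ∪ Yn n c) = c + 1 ∧
      ((1 / 4 : ℝ) - ε) * 2 ^ (n + 1) ≤ ((Xn n c ∪ Yn n c).ncard : ℝ) := by
  rw [← eventually_atTop]
  filter_upwards [eventually_ge_atTop (3 * c + 4),
    eventually_mul_choose_half_le (c + 2) (mul_pos four_pos hε)] with n hn hmiddle
  refine ⟨triangleFree_Xn_union_Yn (by omega), zero_notMem_Xn_union_Yn,
    span_Xn_union_Yn (by omega), critNum_Xn_union_Yn (by omega), ?_⟩
  have hY : ((Yn n c).ncard : ℝ) ≤ (Xn n c ∪ Yn n c).ncard := by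
    exact_mod_cast Set.ncard_le_ncard Set.subset_union_right (Set.toFinite _)
  have hbound : (2 : ℝ) ^ n ≤ 2 * (Yn n c).ncard + (c + 2) * n.choose (n / 2) := by
    exact_mod_cast two_pow_le_two_mul_ncard_Yn_add (by omega : c + 2 ≤ n)
  rw [pow_succ]
  linarith
end

section
/- Let c ≥ 0, s, n be integers with n ≥ 2^(c+1)·s and s > c, and let W be a c × n matrix over ZMod 2. Then for each vector v ∈ (ZMod 2)^n, the number of vectors x ∈ (ZMod 2)^n satisfying W·x = W·v and wt(x) ≤ s is at least (n / (2^(c+1)·s))^(s−c−1), where the right-hand side is interpreted as a real number. -/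
open Finset

section HammingNorm

variable {ι R : Type*} [Fintype ι] [DecidableEq R]

theorem hammingNorm_add_le [AddMonoid R] (x y : ι → R) :
    hammingNorm (x + y) ≤ hammingNorm x + hammingNorm y := by
  classical
  refine (card_le_card fun i hi => ?_).trans (card_union_le _ _)
  by_contra h
  simp_all

theorem hammingNorm_indicator_one_le [MulZeroOneClass R] (E : Finset ι) :
    hammingNorm ((E : Set ι).indicator (1 : ι → R)) ≤ #E := by
  classical
  exact card_le_card fun i hi => by_contra fun hiE => by simp_all

end HammingNorm

namespace Matrix

variable {m ι : Type*} [Fintype ι]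

section Field

variable {K : Type*} [Fintype m] [Field K] [DecidableEq K]

theorem exists_mulVec_eq_hammingNorm_lt (W : Matrix m ι K) {x : ι → K}
    (hx : Fintype.card m < hammingNorm x) :
    ∃ y, W *ᵥ y = W *ᵥ x ∧ hammingNorm y < hammingNorm x := by
  set B := ({i | x i ≠ 0} : Finset ι)
  set L : (B → K) →ₗ[K] m → K :=
    W.mulVecLin ∘ₗ Function.ExtendByZero.linearMap K (Subtype.val : B → ι)
  have hL : LinearMap.ker L ≠ ⊥ := L.ker_ne_bot_of_finrank_lt <| by
    rw [Module.finrank_fintype_fun_eq_card, Module.finrank_fintype_fun_eq_card, Fintype.card_coe]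
    exact hx
  obtain ⟨g, hg, hg0⟩ := (Submodule.ne_bot_iff _).mp hL
  obtain ⟨i₀, hi₀⟩ := Function.ne_iff.mp hg0
  set z : ι → K := Function.extend Subtype.val g 0
  have hWz : W *ᵥ z = 0 := hg
  have hzB : ∀ i ∉ B, z i = 0 := fun i hi =>
    Function.extend_apply' _ _ _ fun ⟨j, hj⟩ => hi (hj ▸ j.2)
  have hz₀ : z i₀ ≠ 0 := (Subtype.val_injective.extend_apply _ _ _).trans_ne hi₀
  refine ⟨x - (x i₀ / z i₀) • z, ?_, card_lt_card ?_⟩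
  · rw [mulVec_sub, mulVec_smul, hWz, smul_zero, sub_zero]
  · refine (ssubset_iff_of_subset fun i hi => ?_).mpr ⟨i₀, i₀.2, by simp [hz₀]⟩
    by_contra hiB
    have hxi : x i = 0 := by simpa [B] using hiB
    simp [hxi, hzB i hiB] at hi

theorem exists_mulVec_eq_hammingNorm_le (W : Matrix m ι K) (x : ι → K) :
    ∃ y, W *ᵥ y = W *ᵥ x ∧ hammingNorm y ≤ Fintype.card m := by
  induction h : hammingNorm x using Nat.strong_induction_on generalizing x with
  | _ k ih =>
    by_cases hx : hammingNorm x ≤ Fintype.card m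
    · exact ⟨x, rfl, hx⟩
    obtain ⟨y, hWy, hy⟩ := W.exists_mulVec_eq_hammingNorm_lt (not_le.mp hx)
    obtain ⟨y', hWy', hy'⟩ := ih _ (h ▸ hy) y rfl
    exact ⟨y', hWy'.trans hWy, hy'⟩

end Field

theorem exists_le_card_col_eq [Fintype m] [DecidableEq m] {R : Type*} [Fintype R] [DecidableEq R] [Nonempty R]
    (W : Matrix m ι R) :
    ∃ t : m → R, (Fintype.card ι : ℝ) / Fintype.card R ^ Fintype.card m ≤ #{j | W.col j = t} := by
  apply Fintype.exists_le_card_fiber_of_nsmul_le_card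
  rw [Fintype.card_fun, nsmul_eq_mul, Nat.cast_pow]
  exact (mul_div_cancel₀ _ (by positivity)).le

section CharTwo

variable {R : Type*} [Ring R] [CharP R 2]

theorem mulVec_indicator_eq_zero_of_col_eq (W : Matrix m ι R) {E : Finset ι} {t : m → R}
    (hE : ∀ j ∈ E, W.col j = t) (hcard : Even #E) :
    W *ᵥ (E : Set ι).indicator 1 = 0 := by
  funext r
  have hsum : (W *ᵥ (E : Set ι).indicator 1) r = ∑ j ∈ E, t r := by
    classical
    simp only [mulVec, dotProduct, Set.indicator_apply, mem_coe, Pi.one_apply, mul_ite, mul_one,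
      mul_zero, sum_ite_mem, univ_inter]
    exact sum_congr rfl fun j hj => congrFun (hE j hj) r
  rw [hsum, sum_const, nsmul_eq_mul, (CharP.cast_eq_zero_iff R 2 _).mpr (even_iff_two_dvd.mp hcard),
    zero_mul, Pi.zero_apply]

theorem choose_card_le_ncard_mulVec_eq [Finite R] [DecidableEq R] (W : Matrix m ι R)
    (x₀ : ι → R) {P : Finset ι} {t : m → R} (hP : ∀ j ∈ P, W.col j = t) {k s : ℕ}
    (hk : Even k) (hs : hammingNorm x₀ + k ≤ s) :
    (#P).choose k ≤ {x | W *ᵥ x = W *ᵥ x₀ ∧ hammingNorm x ≤ s}.ncard := by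
  have := CharP.nontrivial_of_char_ne_one (R := R) (v := 2) (by norm_num)
  rw [← card_powersetCard, ← Set.ncard_coe_finset]
  refine Set.ncard_le_ncard_of_injOn (fun E => x₀ + (E : Set ι).indicator 1) (fun E hE => ?_)
    (fun E₁ _ E₂ _ h => coe_injective (Set.indicator_one_inj R (add_left_cancel h)))
    (Set.toFinite _)
  obtain ⟨hEP, hEk⟩ := mem_powersetCard.mp hE
  refine ⟨?_, ?_⟩
  · rw [mulVec_add, W.mulVec_indicator_eq_zero_of_col_eq (fun j hj => hP j (hEP hj)) (hEk ▸ hk),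
      add_zero]
  · calc hammingNorm (x₀ + (E : Set ι).indicator 1)
        ≤ hammingNorm x₀ + hammingNorm ((E : Set ι).indicator (1 : ι → R)) :=
          hammingNorm_add_le _ _
      _ ≤ hammingNorm x₀ + #E := Nat.add_le_add_left (hammingNorm_indicator_one_le E) _
      _ ≤ s := hEk ▸ hs

end CharTwo

end Matrix

namespace Nat

variable {α : Type*} [Field α] [LinearOrder α] [IsStrictOrderedRing α]

theorem div_pow_le_choose (k m : ℕ) : (((m + 1 - k : ℕ) : α) / k) ^ k ≤ m.choose k :=
  calc (((m + 1 - k : ℕ) : α) / k) ^ k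
      ≤ ((m + 1 - k : ℕ) ^ k : α) / k ! := by
        rw [div_pow]
        exact div_le_div_of_nonneg_left (by positivity) (mod_cast k.factorial_pos)
          (mod_cast k.factorial_le_pow)
    _ ≤ m.choose k := pow_le_choose k m

theorem pow_le_choose_of_two_mul_mul_le {N : α} (hN : 1 ≤ N) {k m : ℕ} (hkm : 2 * N * k ≤ m) :
    N ^ k ≤ m.choose k := by
  rcases k.eq_zero_or_pos with rfl | hk
  · simp
  refine (pow_le_pow_left₀ (by linarith) ?_ k).trans (div_pow_le_choose k m)
  have hk' : (0 : α) < k := mod_cast hk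
  have hkm' : k ≤ m := by
    have : (k : α) ≤ m := by nlinarith
    exact_mod_cast this
  rw [le_div_iff₀ hk', Nat.cast_sub (by omega)]
  push_cast
  nlinarith

end Nat

theorem stmt_6 (c s n : ℕ) (hn : 2 ^ (c + 1) * s ≤ n) (hs : c < s)
    (W : Matrix (Fin c) (Fin n) (ZMod 2)) (v : Fin n → ZMod 2) :
    ((n : ℝ) / (2 ^ (c + 1) * s)) ^ (s - c - 1) ≤
      (({x : Fin n → ZMod 2 | W.mulVec x = W.mulVec v ∧ hWt x ≤ s}).ncard : ℝ) := by
  obtain ⟨x₀, hx₀, hwt⟩ := W.exists_mulVec_eq_hammingNorm_le v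
  obtain ⟨t, ht⟩ := W.exists_le_card_col_eq
  simp only [Fintype.card_fin, ZMod.card, Nat.cast_ofNat] at hwt ht
  set k := 2 * ((s - c) / 2)
  have hcount := W.choose_card_le_ncard_mulVec_eq x₀ (P := {j | W.col j = t})
    (fun j hj => (mem_filter.mp hj).2) (even_two_mul ((s - c) / 2)) (s := s) (by omega)
  rw [hx₀] at hcount
  let N : ℝ := n / (2 ^ (c + 1) * s)
  have hs0 : (0 : ℝ) < s := mod_cast (by omega : 0 < s)
  have hN : 1 ≤ N := (one_le_div (by positivity)).mpr (mod_cast hn)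
  have h2N : 2 * N * k ≤ #{j | W.col j = t} :=
    calc 2 * N * k ≤ 2 * N * s := by gcongr; exact_mod_cast (by omega : k ≤ s)
      _ = n / 2 ^ c := by simp only [N, pow_succ]; field_simp
      _ ≤ _ := ht
  calc N ^ (s - c - 1) ≤ N ^ k := pow_le_pow_right₀ hN (by omega)
    _ ≤ _ := Nat.pow_le_choose_of_two_mul_mul_le hN h2N
    _ ≤ _ := mod_cast hcount
end
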